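/- Let f, h : X → ℝ be functions on a set X, let ρ₁ and ρ₂ be probability measures on X, and let γ > 0. Suppose that for ρ₁⊗ρ₂-almost every pair (x, x'), f(x) - f(x') ≥ γ. Define the error e(x) = h(x) - f(x). Then the probability under ρ₁⊗ρ₂ that h(x) ≤ h(x') is at most (4/γ²)·(𝔼_{x∼ρ₁}[e(x)²] + 𝔼_{x'∼ρ₂}[e(x')²]). -/

import Mathlib

open MeasureTheory

lemma integrable_comp_fst {X : Type*} [MeasurableSpace X]
    (ρ₁ ρ₂ : Measure X) [IsProbabilityMeasure ρ₁] [IsProbabilityMeasure ρ₂]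
    (g : X → ℝ) (hg : Measurable g) (hint : Integrable g ρ₁) :
    Integrable (fun p : X × X => g p.1) (ρ₁.prod ρ₂) := by
  have : ρ₁ = (ρ₁.prod ρ₂).map Prod.fst := by
    rw [← Measure.fst, Measure.fst_prod]
  rw [this] at hint
  exact (integrable_map_measure hg.aestronglyMeasurable measurable_fst.aemeasurable).mp hint

lemma integrable_comp_snd {X : Type*} [MeasurableSpace X]
    (ρ₁ ρ₂ : Measure X) [IsProbabilityMeasure ρ₁] [IsProbabilityMeasure ρ₂]
    (g : X → ℝ) (hg : Measurable g) (hint : Integrable g ρ₂) :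
    Integrable (fun p : X × X => g p.2) (ρ₁.prod ρ₂) := by
  have : ρ₂ = (ρ₁.prod ρ₂).map Prod.snd := by
    rw [← Measure.snd, Measure.snd_prod]
  rw [this] at hint
  exact (integrable_map_measure hg.aestronglyMeasurable measurable_snd.aemeasurable).mp hint

/-- Mis-ranking probability is bounded by (4/γ²) times the sum of the mean squared
prediction errors under the two marginals, given a margin condition. -/
theorem ranking_error_le_mse
    {X : Type*} [MeasurableSpace X]
    (ρ₁ ρ₂ : Measure X) [IsProbabilityMeasure ρ₁] [IsProbabilityMeasure ρ₂]
    (f h : X → ℝ) (hf : Measurable f) (hh : Measurable h)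
    (γ : ℝ) (hγ : 0 < γ)
    (hmargin : ∀ᵐ p ∂(ρ₁.prod ρ₂), f p.1 - f p.2 ≥ γ)
    (hint₁ : Integrable (fun x => (h x - f x) ^ 2) ρ₁)
    (hint₂ : Integrable (fun x => (h x - f x) ^ 2) ρ₂) :
    ((ρ₁.prod ρ₂) {p : X × X | h p.1 ≤ h p.2}).toReal
      ≤ 4 / γ ^ 2 *
        ((∫ x, (h x - f x) ^ 2 ∂ρ₁) + ∫ x, (h x - f x) ^ 2 ∂ρ₂) := by
  set E : X → ℝ := fun x => (h x - f x) ^ 2 with hE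
  have hEmeas : Measurable E := ((hh.sub hf).pow_const 2)
  set g : X × X → ℝ := fun p => E p.1 + E p.2 with hg
  have hgint : Integrable g (ρ₁.prod ρ₂) :=
    (integrable_comp_fst ρ₁ ρ₂ E hEmeas hint₁).add
      (integrable_comp_snd ρ₁ ρ₂ E hEmeas hint₂)
  -- a.e. inclusion of the bad set in the superlevel set
  have hsub : (ρ₁.prod ρ₂) {p : X × X | h p.1 ≤ h p.2}
      ≤ (ρ₁.prod ρ₂) {p : X × X | γ ^ 2 / 4 ≤ g p} := by
    apply measure_mono_ae
    filter_upwards [hmargin] with p hp hple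
    replace hple : h p.1 ≤ h p.2 := hple
    show γ ^ 2 / 4 ≤ g p
    have h1 : γ ≤ (h p.2 - f p.2) - (h p.1 - f p.1) := by linarith
    have h2 : γ ^ 2 ≤ ((h p.2 - f p.2) - (h p.1 - f p.1)) ^ 2 := by
      nlinarith
    simp only [hg, hE]
    nlinarith [sq_nonneg ((h p.1 - f p.1) + (h p.2 - f p.2))]
  -- Chebyshev
  have hcheb : γ ^ 2 / 4 * ((ρ₁.prod ρ₂) {p : X × X | γ ^ 2 / 4 ≤ g p}).toReal
      ≤ ∫ p, g p ∂(ρ₁.prod ρ₂) := by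
    apply mul_meas_ge_le_integral_of_nonneg _ hgint
    filter_upwards with p
    exact add_nonneg (sq_nonneg _) (sq_nonneg _)
  -- compute the integral
  have hint_eq : ∫ p, g p ∂(ρ₁.prod ρ₂) = (∫ x, E x ∂ρ₁) + ∫ x, E x ∂ρ₂ := by
    rw [integral_add (integrable_comp_fst ρ₁ ρ₂ E hEmeas hint₁)
      (integrable_comp_snd ρ₁ ρ₂ E hEmeas hint₂)]
    congr 1
    · rw [integral_prod _ (integrable_comp_fst ρ₁ ρ₂ E hEmeas hint₁)]
      simp
    · rw [integral_prod _ (integrable_comp_snd ρ₁ ρ₂ E hEmeas hint₂)]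
      simp
  have hfin : (ρ₁.prod ρ₂) {p : X × X | h p.1 ≤ h p.2} ≠ ⊤ :=
    (measure_lt_top _ _).ne
  have htoReal : ((ρ₁.prod ρ₂) {p : X × X | h p.1 ≤ h p.2}).toReal
      ≤ ((ρ₁.prod ρ₂) {p : X × X | γ ^ 2 / 4 ≤ g p}).toReal :=
    ENNReal.toReal_mono (measure_lt_top _ _).ne hsub
  have hγ2 : (0:ℝ) < γ ^ 2 / 4 := by positivity
  calc ((ρ₁.prod ρ₂) {p : X × X | h p.1 ≤ h p.2}).toReal
      ≤ ((ρ₁.prod ρ₂) {p : X × X | γ ^ 2 / 4 ≤ g p}).toReal := htoReal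
    _ ≤ (∫ p, g p ∂(ρ₁.prod ρ₂)) / (γ ^ 2 / 4) := by
        rw [le_div_iff₀ hγ2]; linarith [hcheb]
    _ = 4 / γ ^ 2 * ((∫ x, E x ∂ρ₁) + ∫ x, E x ∂ρ₂) := by
        rw [hint_eq]; field_simp
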